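/- Suppose a labelling ℓ: D → H of the unique games instance Γ(C,𝒯) (with vertex set D = C^⊥, alphabet the subcode H ⊆ D, and constraints 'ℓ(c+q+h) − ℓ(c+h') = h − h'' for random c ∈ D, h,h' ∈ H, q ∼ 𝒯) satisfies a θ fraction of constraints. Define f_p(c) = E_{h∈H}[1[ℓ(c+h) = p+h]] for each p ∈ H. Then θ = Σ_{p∈H} ⟨f_p, G f_p⟩ where G = Cay(C^⊥,𝒯), each f_p takes values in [0,1], and E_{c∈D}[f_p(c)] = 1/|H| for every p ∈ H. -/

import Mathlib

open Finset
open scoped Classical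

/-- Words of length `N` over `GF(2)`. -/
abbrev Word (N : ℕ) := Fin N → ZMod 2

/-- The dual of a set of words: all words orthogonal (over `GF(2)`) to every element. -/
def dualSet {N : ℕ} (C : Set (Word N)) : Set (Word N) :=
  {x | ∀ c ∈ C, ∑ i, c i * x i = 0}

/-- The finite set of codewords of the dual code. -/
noncomputable def dualFinset {N : ℕ} (C : Set (Word N)) : Finset (Word N) :=
  univ.filter (· ∈ dualSet C)

/-- The finite set of elements of a subgroup. -/
noncomputable def grpFinset {N : ℕ} (H : AddSubgroup (Word N)) : Finset (Word N) :=
  univ.filter (· ∈ H)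

/-! Since `ℓ` takes values in `H`, the constraint indicator `1[ℓ(x) − ℓ(y) = h − h']` equals
`∑_{p ∈ H} 1[ℓ(y) = p + h'] · 1[ℓ(x) = p + h]`, the only contributing `p` being `ℓ(y) − h'`;
exchanging the order of summation then turns the acceptance probability into
`∑_p ⟨f_p, G f_p⟩`. For the mean of `f_p`, translating `c ↦ c + h` preserves `D = C^⊥`
because `H ⊆ D`, and afterwards exactly one `h ∈ H` satisfies `ℓ(c) = p + h`. -/

section LabelCount

variable {G : Type*} [AddCommGroup G] [DecidableEq G]

theorem ite_sub_eq_sub_eq_sum_mul {x y u v : G} {s : Finset G} (hyv : y - v ∈ s) :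
    (if x - y = u - v then (1 : ℝ) else 0) =
      ∑ p ∈ s, (if y = p + v then (1 : ℝ) else 0) * (if x = p + u then 1 else 0) := by
  rw [sum_eq_single_of_mem (y - v) hyv fun p _ hp => by
    rw [if_neg fun h => hp (eq_sub_of_add_eq h.symm), zero_mul]]
  rw [if_pos (sub_add_cancel y v).symm, one_mul]
  exact if_congr (by rw [sub_eq_iff_eq_add, show u - v + y = y - v + u by abel]) rfl rfl

/-- The paper's `f_p(c)` is `labelCount ℓ H p c / |H|`. -/
noncomputable def labelCount (ℓ : G → G) (s : Finset G) (p c : G) : ℝ :=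
  ∑ h ∈ s, if ℓ (c + h) = p + h then 1 else 0

variable {ℓ : G → G} {s : Finset G}

theorem labelCount_nonneg (p c : G) : 0 ≤ labelCount ℓ s p c := by
  rw [labelCount, sum_boole]
  exact Nat.cast_nonneg _

theorem labelCount_le_card (p c : G) : labelCount ℓ s p c ≤ s.card := by
  rw [labelCount, sum_boole]
  exact Nat.cast_le.mpr (card_filter_le _ _)

theorem sum_sum_ite_sub_eq_eq_sum_labelCount_mul
    (hs : ∀ x ∈ s, ∀ y ∈ s, x - y ∈ s) (hℓ : ∀ c, ℓ c ∈ s) (u v : G) :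
    ∑ h ∈ s, ∑ h' ∈ s, (if ℓ (u + h) - ℓ (v + h') = h - h' then (1 : ℝ) else 0) =
      ∑ p ∈ s, labelCount ℓ s p v * labelCount ℓ s p u := by
  simp only [labelCount, sum_mul_sum]
  rw [sum_comm]
  refine (sum_congr rfl fun h' hh' => sum_congr rfl fun h _ =>
    ite_sub_eq_sub_eq_sum_mul (hs _ (hℓ _) _ hh')).trans ?_
  exact (sum_congr rfl fun _ _ => sum_comm).trans sum_comm

theorem sum_labelCount_eq_card {D : Finset G} (hD : ∀ h ∈ s, ∀ c, c + h ∈ D ↔ c ∈ D)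
    (hs : ∀ x ∈ s, ∀ y ∈ s, x - y ∈ s) (hℓ : ∀ c, ℓ c ∈ s) {p : G} (hp : p ∈ s) :
    ∑ c ∈ D, labelCount ℓ s p c = D.card := by
  have translate : ∀ h ∈ s, ∑ c ∈ D, (if ℓ (c + h) = p + h then (1 : ℝ) else 0) =
      ∑ c ∈ D, if ℓ c = p + h then 1 else 0 := fun h hh =>
    sum_equiv (Equiv.addRight h) (fun c => (hD h hh c).symm) fun _ _ => rfl
  have unique : ∀ c, ∑ h ∈ s, (if ℓ c = p + h then (1 : ℝ) else 0) = 1 := fun c => by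
    rw [sum_eq_single_of_mem (ℓ c - p) (hs _ (hℓ c) _ hp) fun h _ hne =>
      if_neg fun e => hne (by rw [e]; abel), if_pos (by abel)]
  simp only [labelCount]
  rw [sum_comm, sum_congr rfl translate, sum_comm]
  simp [unique]

theorem sum_weighted_ite_sub_eq_eq_sum_labelCount [Fintype G]
    (hs : ∀ x ∈ s, ∀ y ∈ s, x - y ∈ s) (hℓ : ∀ c, ℓ c ∈ s) (w : G → ℝ) (D : Finset G) :
    ∑ c ∈ D, ∑ h ∈ s, ∑ h' ∈ s, ∑ q,
        w q * (if ℓ (c + q + h) - ℓ (c + h') = h - h' then (1 : ℝ) else 0) =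
      ∑ p ∈ s, ∑ c ∈ D, labelCount ℓ s p c * ∑ q, w q * labelCount ℓ s p (c + q) := by
  calc _ = ∑ c ∈ D, ∑ q, w q * ∑ h ∈ s, ∑ h' ∈ s,
          (if ℓ (c + q + h) - ℓ (c + h') = h - h' then (1 : ℝ) else 0) := by
        refine sum_congr rfl fun c _ => ?_
        simp only [mul_sum]
        exact (sum_congr rfl fun _ _ => sum_comm).trans sum_comm
    _ = ∑ c ∈ D, ∑ q, w q * ∑ p ∈ s, labelCount ℓ s p c * labelCount ℓ s p (c + q) := by
        simp only [sum_sum_ite_sub_eq_eq_sum_labelCount_mul hs hℓ]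
    _ = _ := by
        simp only [mul_sum]
        refine ((sum_congr rfl fun _ _ => sum_comm).trans sum_comm).trans
          (sum_congr rfl fun _ _ => sum_congr rfl fun _ _ => sum_congr rfl fun _ _ => by ring)

end LabelCount

section DualCode

variable {N : ℕ}

@[simp]
theorem mem_grpFinset {H : AddSubgroup (Word N)} {x : Word N} : x ∈ grpFinset H ↔ x ∈ H := by
  simp [grpFinset]

@[simp]
theorem mem_dualFinset {C : Set (Word N)} {x : Word N} : x ∈ dualFinset C ↔ x ∈ dualSet C := by
  simp [dualFinset]

theorem zero_mem_dualSet (C : Set (Word N)) : 0 ∈ dualSet C := by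
  simp [dualSet]

theorem add_mem_dualSet_iff {C : Set (Word N)} {h : Word N} (hh : h ∈ dualSet C) (c : Word N) :
    c + h ∈ dualSet C ↔ c ∈ dualSet C := by
  simp only [dualSet, Set.mem_ofPred_eq, Pi.add_apply, mul_add, sum_add_distrib]
  exact forall₂_congr fun x hx => by rw [hh x hx, add_zero]

end DualCode

theorem stmt18_general {N : ℕ} (C : Submodule (ZMod 2) (Word N))
    (w : Word N → ℝ)
    (H : AddSubgroup (Word N))
    (hHsub : (H : Set (Word N)) ⊆ dualSet (C : Set (Word N)))
    (ℓ : Word N → Word N) (hℓ : ∀ c, ℓ c ∈ H)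
    (f : Word N → Word N → ℝ)
    (hf : ∀ p c, f p c =
      (∑ h ∈ grpFinset H, if ℓ (c + h) = p + h then (1 : ℝ) else 0) /
        ((grpFinset H).card : ℝ))
    (θ : ℝ)
    (hθ : θ = (∑ c ∈ dualFinset (C : Set (Word N)), ∑ h ∈ grpFinset H,
        ∑ h' ∈ grpFinset H, ∑ q,
          w q * (if ℓ (c + q + h) - ℓ (c + h') = h - h' then (1 : ℝ) else 0)) /
        (((dualFinset (C : Set (Word N))).card : ℝ) * ((grpFinset H).card : ℝ) *
          ((grpFinset H).card : ℝ))) :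
    θ = (∑ p ∈ grpFinset H,
          (∑ c ∈ dualFinset (C : Set (Word N)), f p c * ∑ q, w q * f p (c + q)) /
            ((dualFinset (C : Set (Word N))).card : ℝ)) ∧
    (∀ p c, 0 ≤ f p c ∧ f p c ≤ 1) ∧
    (∀ p ∈ H,
      (∑ c ∈ dualFinset (C : Set (Word N)), f p c) /
          ((dualFinset (C : Set (Word N))).card : ℝ)
        = 1 / ((grpFinset H).card : ℝ)) := by
  have hs : ∀ x ∈ grpFinset H, ∀ y ∈ grpFinset H, x - y ∈ grpFinset H := by
    simpa using fun x hx y hy => H.sub_mem hx hy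
  have hℓs : ∀ c, ℓ c ∈ grpFinset H := fun c => mem_grpFinset.2 (hℓ c)
  have hD : ∀ h ∈ grpFinset H, ∀ c,
      c + h ∈ dualFinset (C : Set (Word N)) ↔ c ∈ dualFinset (C : Set (Word N)) :=
    fun h hh c => by simpa using add_mem_dualSet_iff (hHsub (mem_grpFinset.1 hh)) c
  have hDcard : ((dualFinset (C : Set (Word N))).card : ℝ) ≠ 0 :=
    Nat.cast_ne_zero.2 (card_ne_zero_of_mem (mem_dualFinset.2 (zero_mem_dualSet _)))
  obtain rfl : f = fun p c => labelCount ℓ (grpFinset H) p c / (grpFinset H).card :=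
    funext₂ hf
  refine ⟨?_, fun p c => ⟨div_nonneg (labelCount_nonneg p c) (Nat.cast_nonneg _), ?_⟩,
    fun p hp => ?_⟩
  · rw [hθ, sum_weighted_ite_sub_eq_eq_sum_labelCount hs hℓs, sum_div]
    refine sum_congr rfl fun p _ => ?_
    simp only [div_eq_mul_inv, sum_mul, mul_sum]
    exact sum_congr rfl fun c _ => sum_congr rfl fun q _ => by ring
  · exact div_le_one_of_le₀ (labelCount_le_card p c) (Nat.cast_nonneg _)
  · rw [← sum_div, sum_labelCount_eq_card hD hs hℓs (mem_grpFinset.2 hp),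
      div_div_cancel_left' hDcard, one_div]

/-- Soundness arithmetization for the unique games instance `Γ(C,𝒯)`: if the labelling
`ℓ : D → H` satisfies a `θ` fraction of the constraints
`ℓ(c+q+h) − ℓ(c+h') = h − h'`, then `θ = ∑_{p∈H} ⟨f_p, G f_p⟩` where
`f_p(c) = E_{h∈H}[1[ℓ(c+h) = p+h]]`; moreover each `f_p` is `[0,1]`-valued and has mean
`1/|H|`. -/
theorem stmt18 {N : ℕ} (C : Submodule (ZMod 2) (Word N))
    (w : Word N → ℝ) (hw0 : ∀ q, 0 ≤ w q) (hw1 : ∑ q, w q = 1)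
    (hsupp : ∀ q, w q ≠ 0 → q ∈ dualSet (C : Set (Word N)))
    (H : AddSubgroup (Word N))
    (hHsub : (H : Set (Word N)) ⊆ dualSet (C : Set (Word N)))
    (ℓ : Word N → Word N) (hℓ : ∀ c, ℓ c ∈ H)
    (f : Word N → Word N → ℝ)
    (hf : ∀ p c, f p c =
      (∑ h ∈ grpFinset H, if ℓ (c + h) = p + h then (1 : ℝ) else 0) /
        ((grpFinset H).card : ℝ))
    (θ : ℝ)
    (hθ : θ = (∑ c ∈ dualFinset (C : Set (Word N)), ∑ h ∈ grpFinset H,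
        ∑ h' ∈ grpFinset H, ∑ q,
          w q * (if ℓ (c + q + h) - ℓ (c + h') = h - h' then (1 : ℝ) else 0)) /
        (((dualFinset (C : Set (Word N))).card : ℝ) * ((grpFinset H).card : ℝ) *
          ((grpFinset H).card : ℝ))) :
    θ = (∑ p ∈ grpFinset H,
          (∑ c ∈ dualFinset (C : Set (Word N)), f p c * ∑ q, w q * f p (c + q)) /
            ((dualFinset (C : Set (Word N))).card : ℝ)) ∧
    (∀ p c, 0 ≤ f p c ∧ f p c ≤ 1) ∧
    (∀ p ∈ H,
      (∑ c ∈ dualFinset (C : Set (Word N)), f p c) /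
          ((dualFinset (C : Set (Word N))).card : ℝ)
        = 1 / ((grpFinset H).card : ℝ)) :=
  stmt18_general C w H hHsub ℓ hℓ f hf θ hθ
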